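/- For a prime power q and an integer n ≥ 2, the number of square-free monic polynomials of degree n over the finite field 𝔽_q equals q^n - q^{n-1}. -/

import Mathlib

open Polynomial UniqueFactorizationMonoid Finset

namespace CardSquarefreeAux

variable {F : Type} [Field F] [Fintype F]

/-- Monic polynomials of degree `n`. -/
abbrev MB (F : Type) [Field F] (n : ℕ) := {f : F[X] // f.Monic ∧ f.natDegree = n}

/-- Squarefree monic polynomials of degree `n`. -/
abbrev SB (F : Type) [Field F] (n : ℕ) :=
  {f : F[X] // f.Monic ∧ Squarefree f ∧ f.natDegree = n}

noncomputable def monicEquiv (n : ℕ) : MB F n ≃ degreeLT F n where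
  toFun f := ⟨f.1 - X ^ n, by
    rw [mem_degreeLT]
    have hf := f.2.1
    have hd : f.1.degree = (n : WithBot ℕ) := by
      rw [degree_eq_natDegree hf.ne_zero, f.2.2]
    have := degree_sub_lt (q := X ^ n) (by rw [hd, degree_X_pow]) hf.ne_zero
      (by rw [hf.leadingCoeff, leadingCoeff_X_pow])
    rwa [hd] at this⟩
  invFun g := ⟨X ^ n + g.1, by
    have hg : g.1.degree < (n : WithBot ℕ) := mem_degreeLT.mp g.2
    refine ⟨monic_X_pow_add hg, ?_⟩
    have : (X ^ n + g.1).degree = (n : WithBot ℕ) := by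
      rw [degree_add_eq_left_of_degree_lt (by rwa [degree_X_pow]), degree_X_pow]
    exact natDegree_eq_of_degree_eq_some this⟩
  left_inv f := Subtype.ext (by simp only []; ring)
  right_inv g := Subtype.ext (by simp only []; ring)

instance (n : ℕ) : Finite (MB F n) :=
  Finite.of_equiv _ ((monicEquiv n).trans (degreeLTEquiv F n).toEquiv).symm

instance (n : ℕ) : Finite (SB F n) :=
  Finite.of_injective (fun f => (⟨f.1, f.2.1, f.2.2.2⟩ : MB F n))
    (fun a b h => by
      simp only [Subtype.mk.injEq] at h
      exact Subtype.ext h)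

lemma card_MB (n : ℕ) : Nat.card (MB F n) = Fintype.card F ^ n := by
  rw [Nat.card_congr ((monicEquiv n).trans (degreeLTEquiv F n).toEquiv), Nat.card_pi]
  simp [Nat.card_eq_fintype_card]

lemma exists_decomp : ∀ (N : ℕ) (f : F[X]), f.natDegree ≤ N → f.Monic →
    ∃ s h : F[X], s.Monic ∧ Squarefree s ∧ h.Monic ∧ f = s * h ^ 2 := by
  intro N
  induction N using Nat.strong_induction_on with
  | _ N ih =>
    intro f hdeg hf
    by_cases hsf : Squarefree f
    · exact ⟨f, 1, hf, hsf, monic_one, by ring⟩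
    · classical
      rw [Squarefree] at hsf
      push_neg at hsf
      obtain ⟨x, hxd, hxu⟩ := hsf
      have hx0 : x ≠ 0 := by
        rintro rfl
        exact hf.ne_zero (zero_dvd_iff.mp (by simpa using hxd))
      set p := normalize x with hp
      have hpm : p.Monic := monic_normalize hx0
      have hpd : p * p ∣ f := mul_dvd_mul (normalize_dvd_iff.mpr dvd_rfl)
        (normalize_dvd_iff.mpr dvd_rfl) |>.trans hxd
      have hpu : ¬ IsUnit p := fun h => hxu ((normalize_associated x).isUnit h)
      have hp1 : 1 ≤ p.natDegree := by
        rcases Nat.eq_zero_or_pos p.natDegree with h0 | h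
        · exact absurd (hpm.natDegree_eq_zero.mp h0 ▸ isUnit_one) hpu
        · exact h
      obtain ⟨g, hg⟩ := hpd
      have hgm : g.Monic := (hpm.mul hpm).of_mul_monic_left (hg ▸ hf)
      have hdg : p.natDegree + p.natDegree + g.natDegree = f.natDegree := by
        rw [hg, (hpm.mul hpm).natDegree_mul hgm, hpm.natDegree_mul hpm]
      obtain ⟨s, h, hs, hss, hh, hfsh⟩ := ih (N - 2) (by omega) g (by omega) hgm
      exact ⟨s, p * h, hs, hss, hpm.mul hh, by rw [hg, hfsh]; ring⟩

lemma decomp_unique {s h s' h' : F[X]} (hs : s.Monic) (hsf : Squarefree s) (hh : h.Monic)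
    (hs' : s'.Monic) (hsf' : Squarefree s') (hh' : h'.Monic)
    (heq : s * h ^ 2 = s' * h' ^ 2) : s = s' ∧ h = h' := by
  classical
  have key : normalizedFactors h = normalizedFactors h' := by
    rw [Multiset.ext]
    intro a
    have e1 : normalizedFactors (s * h ^ 2)
        = normalizedFactors s + 2 • normalizedFactors h := by
      rw [normalizedFactors_mul hs.ne_zero (pow_ne_zero _ hh.ne_zero),
        normalizedFactors_pow]
    have e2 : normalizedFactors (s' * h' ^ 2)
        = normalizedFactors s' + 2 • normalizedFactors h' := by
      rw [normalizedFactors_mul hs'.ne_zero (pow_ne_zero _ hh'.ne_zero),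
        normalizedFactors_pow]
    have c1 : Multiset.count a (normalizedFactors s) ≤ 1 :=
      Multiset.nodup_iff_count_le_one.mp
        ((squarefree_iff_nodup_normalizedFactors hs.ne_zero).mp hsf) a
    have c2 : Multiset.count a (normalizedFactors s') ≤ 1 :=
      Multiset.nodup_iff_count_le_one.mp
        ((squarefree_iff_nodup_normalizedFactors hs'.ne_zero).mp hsf') a
    have := congrArg (Multiset.count a ∘ normalizedFactors) heq
    simp only [Function.comp, e1, e2, Multiset.count_add, Multiset.count_nsmul] at this
    omega
  have hhh : h = h' := eq_of_monic_of_associated hh hh'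
    (((prod_normalizedFactors hh.ne_zero).symm.trans
      (key ▸ prod_normalizedFactors hh'.ne_zero)))
  subst hhh
  exact ⟨mul_right_cancel₀ (pow_ne_zero 2 hh.ne_zero) heq, rfl⟩

noncomputable local instance : ∀ (P : Prop), Decidable P := Classical.dec

lemma card_sigma' {ι : Type} [Fintype ι] {α : ι → Type} [∀ i, Finite (α i)] :
    Nat.card (Σ i, α i) = ∑ i, Nat.card (α i) := by
  letI : ∀ i, Fintype (α i) := fun i => Fintype.ofFinite _
  simp [Nat.card_eq_fintype_card, Fintype.card_sigma]

lemma key_sum (N : ℕ) :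
    ∑ k ∈ range (N / 2 + 1), Nat.card (SB F (N - 2 * k)) * Fintype.card F ^ k
      = Fintype.card F ^ N := by
  have hbij : Function.Bijective
      (fun x : Σ k : Fin (N / 2 + 1), SB F (N - 2 * (k : ℕ)) × MB F (k : ℕ) =>
        (⟨x.2.1.1 * x.2.2.1 ^ 2, by
          obtain ⟨k, s, h⟩ := x
          have h2k : 2 * (k : ℕ) ≤ N := by
            have := k.2; omega
          refine ⟨s.2.1.mul (h.2.1.pow 2), ?_⟩
          rw [s.2.1.natDegree_mul (h.2.1.pow 2), natDegree_pow, s.2.2.2, h.2.2]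
          omega⟩ : MB F N)) := by
    constructor
    · rintro ⟨k, s, h⟩ ⟨k', s', h'⟩ hxy
      have heq : s.1 * h.1 ^ 2 = s'.1 * h'.1 ^ 2 := congrArg Subtype.val hxy
      obtain ⟨hss, hhh⟩ := decomp_unique s.2.1 s.2.2.1 h.2.1 s'.2.1 s'.2.2.1 h'.2.1 heq
      have hk : k = k' := Fin.ext (by rw [← h.2.2, ← h'.2.2, hhh])
      subst hk
      have : (s, h) = (s', h') := Prod.ext (Subtype.ext hss) (Subtype.ext hhh)
      exact congrArg (Sigma.mk k) this
    · rintro ⟨f, hfm, hfd⟩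
      obtain ⟨s, h, hs, hss, hh, hfsh⟩ := exists_decomp f.natDegree f le_rfl hfm
      have hdeg : s.natDegree + 2 * h.natDegree = N := by
        rw [← hfd, hfsh, hs.natDegree_mul (hh.pow 2), natDegree_pow]
      have hk : h.natDegree < N / 2 + 1 := by omega
      refine ⟨⟨⟨h.natDegree, hk⟩, ⟨s, hs, hss, ?_⟩, ⟨h, hh, rfl⟩⟩, Subtype.ext hfsh.symm⟩
      simp only [Fin.val_mk]
      omega
  have := Nat.card_eq_of_bijective _ hbij
  rw [card_MB] at this
  rw [← this, card_sigma']
  rw [Fin.sum_univ_eq_sum_range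
    (fun k => Nat.card (SB F (N - 2 * k) × MB F k))]
  refine Finset.sum_congr rfl fun k _ => ?_
  rw [Nat.card_prod, card_MB]

end CardSquarefreeAux

open CardSquarefreeAux Finset in
/-- For a prime power `q` and an integer `n ≥ 2`, the number of square-free monic
polynomials of degree `n` over the finite field with `q` elements is `q^n - q^(n-1)`. -/
theorem card_squarefree_monic (q : ℕ) (hq : IsPrimePow q) (n : ℕ) (hn : 2 ≤ n)
    (F : Type) [Field F] [Fintype F] (hF : Fintype.card F = q) :
    Nat.card {f : Polynomial F // f.Monic ∧ Squarefree f ∧ f.natDegree = n} =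
      q ^ n - q ^ (n - 1) := by
  subst hF
  have h1 := key_sum (F := F) n
  have h2 := key_sum (F := F) (n - 2)
  have hsplit : n / 2 = (n - 2) / 2 + 1 := by omega
  rw [hsplit, Finset.sum_range_succ'] at h1
  have hterm : ∀ k, Nat.card (SB F (n - 2 * (k + 1))) * Fintype.card F ^ (k + 1)
      = (Nat.card (SB F ((n - 2) - 2 * k)) * Fintype.card F ^ k) * Fintype.card F := by
    intro k
    have h3 : n - 2 * (k + 1) = (n - 2) - 2 * k := by omega
    rw [h3, pow_succ]
    ring
  rw [Finset.sum_congr rfl (fun k _ => hterm k), ← Finset.sum_mul, h2] at h1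
  have hpow : Fintype.card F ^ (n - 2) * Fintype.card F = Fintype.card F ^ (n - 1) := by
    rw [← pow_succ]
    congr 1
    omega
  rw [hpow] at h1
  show Nat.card (SB F n) = Fintype.card F ^ n - Fintype.card F ^ (n - 1)
  simp only [Nat.mul_one, Nat.sub_zero, pow_zero, Nat.mul_zero] at h1
  omega
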